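/- arXiv:1107.5406 — 4 statements merged into one kernel-verified Lean document; each statement's English description precedes it below -/
import Mathlib

section
/- Let φ : (0,∞) → (0,∞) be a nondecreasing continuous function (extended continuously to [0,∞)) and define the measure dν = φ(x)dx on (0,∞). If M = ⋃_{j=1}^k (a_j, b_j) is a finite union of disjoint intervals with 0 ≤ a_j < b_j, b_j ≤ a_{j+1}, and d ≥ 0 is chosen so that ν((0,d)) = ν(M), then the weighted perimeter satisfies ∑_{j=1}^k (φ(a_j) + φ(b_j)) ≥ φ(0) + φ(d). -/
/-!
Since the intervals are disjoint, `M ⊆ (0, B]` with `B = max_j b_j`, so `ν(0, d) = ν(M) ≤ ν(0, B)`;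
as `φ > 0`, `x ↦ ν(0, x)` is strictly increasing and hence `d ≤ B`. Monotonicity of `φ` then bounds
`φ 0 + φ d` by `φ (a 0) + φ B`, two distinct terms of the perimeter sum.
-/

open Set MeasureTheory Finset Function

section IntervalChain

variable {α : Type*} [LinearOrder α] {k : ℕ} {a b : Fin k → α}

theorem right_le_left_of_lt (hab : ∀ j, a j ≤ b j)
    (horder : ∀ j j' : Fin k, (j : ℕ) + 1 = j' → b j ≤ a j') {i j : Fin k} (hij : i < j) :
    b i ≤ a j := by
  obtain ⟨n, hn⟩ := j
  induction n with
  | zero => exact absurd hij (Nat.not_lt_zero _)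
  | succ m ih =>
    have hm : m < k := by omega
    have him : (i : ℕ) < m + 1 := hij
    rcases Nat.lt_or_ge i m with hi | hi
    · exact (ih hm hi).trans ((hab _).trans (horder _ _ rfl))
    · exact horder _ _ (show (i : ℕ) + 1 = m + 1 by omega)

theorem pairwise_disjoint_Ioo_of_right_le_left (hab : ∀ j, a j ≤ b j)
    (horder : ∀ j j' : Fin k, (j : ℕ) + 1 = j' → b j ≤ a j') :
    Pairwise (Disjoint on fun j => Ioo (a j) (b j)) := by
  have key {i j : Fin k} (hij : i < j) : Disjoint (Ioo (a i) (b i)) (Ioo (a j) (b j)) :=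
    (Ioc_disjoint_Ioc_of_le (right_le_left_of_lt hab horder hij)).mono
      Ioo_subset_Ioc_self Ioo_subset_Ioc_self
  intro i j hij
  rcases hij.lt_or_gt with h | h
  exacts [key h, (key h).symm]

end IntervalChain

theorem sum_setIntegral_le_setIntegral {X ι : Type*} [MeasurableSpace X] [Fintype ι]
    {μ : Measure X} {f : X → ℝ} {s : ι → Set X} {t : Set X}
    (hs : ∀ i, MeasurableSet (s i)) (hdisj : Pairwise (Disjoint on s)) (hst : ∀ i, s i ⊆ t)
    (hf : IntegrableOn f t μ) (hf₀ : 0 ≤ᵐ[μ.restrict t] f) :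
    ∑ i, ∫ x in s i, f x ∂μ ≤ ∫ x in t, f x ∂μ := by
  rw [← integral_iUnion_fintype hs hdisj fun i => hf.mono_set (hst i)]
  exact setIntegral_mono_set hf hf₀ (iUnion_subset hst).eventuallyLE

theorem le_of_intervalIntegral_le {f : ℝ → ℝ} {a B d : ℝ}
    (hfB : IntervalIntegrable f volume a B) (hfd : IntervalIntegrable f volume B d)
    (hpos : ∀ x ∈ Ioi B, 0 < f x) (h : ∫ x in a..d, f x ≤ ∫ x in a..B, f x) : d ≤ B := by
  by_contra! hBd
  have : 0 < ∫ x in B..d, f x :=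
    intervalIntegral.intervalIntegral_pos_of_pos_on hfd (fun x hx => hpos x hx.1) hBd
  rw [← intervalIntegral.integral_add_adjacent_intervals hfB hfd] at h
  linarith

theorem perimeter_union_intervals_general (φ : ℝ → ℝ) (hφpos : ∀ x ∈ Ici (0:ℝ), 0 < φ x)
    (hφmono : MonotoneOn φ (Ici (0:ℝ)))
    (k : ℕ) (hk : 0 < k) (a b : Fin k → ℝ)
    (ha : ∀ j, 0 ≤ a j) (hab : ∀ j, a j < b j)
    (horder : ∀ (j j' : Fin k), (j:ℕ) + 1 = j' → b j ≤ a j')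
    (d : ℝ) (hd : 0 ≤ d)
    (hmeas : ∫ x in Ioc (0:ℝ) d, φ x = ∑ j, ∫ x in Ioo (a j) (b j), φ x) :
    ∑ j, (φ (a j) + φ (b j)) ≥ φ 0 + φ d := by
  obtain ⟨jmax, -, hjmax⟩ := exists_max_image univ b (univ_nonempty_iff.2 ⟨⟨0, hk⟩⟩)
  have hb : ∀ j, 0 ≤ b j := fun j => (ha j).trans (hab j).le
  have hint {u v : ℝ} (hu : 0 ≤ u) (hv : 0 ≤ v) : IntervalIntegrable φ volume u v :=
    (hφmono.mono fun x hx => (le_min hu hv).trans hx.1).intervalIntegrable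
  have hdB : d ≤ b jmax := by
    refine le_of_intervalIntegral_le (hint le_rfl (hb jmax)) (hint (hb jmax) hd)
      (fun x hx => hφpos x ((hb jmax).trans hx.le)) ?_
    rw [intervalIntegral.integral_of_le hd, intervalIntegral.integral_of_le (hb jmax), hmeas]
    refine sum_setIntegral_le_setIntegral (fun _ => measurableSet_Ioo)
      (pairwise_disjoint_Ioo_of_right_le_left (fun j => (hab j).le) horder)
      (fun j => Ioo_subset_Ioc_self.trans (Ioc_subset_Ioc (ha j) (hjmax j (mem_univ j))))
      ((hint le_rfl (hb jmax)).1) ?_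
    filter_upwards [ae_restrict_mem measurableSet_Ioc] with x hx
    exact (hφpos x hx.1.le).le
  calc φ 0 + φ d ≤ φ (a ⟨0, hk⟩) + φ (b jmax) :=
        add_le_add (hφmono self_mem_Ici (ha _) (ha _)) (hφmono hd (hb jmax) hdB)
    _ ≤ ∑ j, φ (a j) + ∑ j, φ (b j) :=
        add_le_add (single_le_sum (fun j _ => (hφpos _ (ha j)).le) (mem_univ _))
          (single_le_sum (fun j _ => (hφpos _ (hb j)).le) (mem_univ _))
    _ = ∑ j, (φ (a j) + φ (b j)) := sum_add_distrib.symm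

/-- For a nondecreasing continuous weight `φ` on `[0,∞)`, if `M = ⋃_{j<k} (a j, b j)` is a
finite union of disjoint intervals in `(0,∞)` (ordered, `b j ≤ a (j+1)`) and `d ≥ 0` is
such that `∫_0^d φ = ν(M)`, then `∑_j (φ(a j) + φ(b j)) ≥ φ(0) + φ(d)`. -/
theorem perimeter_union_intervals (φ : ℝ → ℝ) (hφpos : ∀ x ∈ Ici (0:ℝ), 0 < φ x)
    (hφmono : MonotoneOn φ (Ici (0:ℝ))) (hφcont : ContinuousOn φ (Ici (0:ℝ)))
    (k : ℕ) (hk : 0 < k) (a b : Fin k → ℝ)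
    (ha : ∀ j, 0 ≤ a j) (hab : ∀ j, a j < b j)
    (horder : ∀ (j j' : Fin k), (j:ℕ) + 1 = j' → b j ≤ a j')
    (d : ℝ) (hd : 0 ≤ d)
    (hmeas : ∫ x in Ioc (0:ℝ) d, φ x = ∑ j, ∫ x in Ioo (a j) (b j), φ x) :
    ∑ j, (φ (a j) + φ (b j)) ≥ φ 0 + φ d :=
  perimeter_union_intervals_general φ hφpos hφmono k hk a b ha hab horder d hd hmeas
end

section
/- Let φ_i : ℝ → (0,∞) for i = 1,…,N-1 and φ_N : (0,∞) → (0,∞) be C² functions, all positive on their domains, with φ_N extending continuously to [0,∞). Suppose that for all x in the half-space ℝ^N_+ = {x_N > 0} one has ∏_{i=1}^N φ_i(x_i) = A(|x|)·B(x/|x|) for some positive C² functions A on (0,∞) and B on the open upper half-sphere. Then there exist a > 0, k ≥ 0, c ∈ ℝ such that ∏_{i=1}^N φ_i(x_i) = a·x_N^k·e^{c|x|²} for x ∈ ℝ^N_+. -/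
open Real Set Finset Filter Topology

/-! With `p = log φᵢ` (`i < N`) and `q = log φ_N`, dilating a point of the `(xᵢ, x_N)`-plane by
`l` changes `p(s) + q(u)` by `log A(l r) - log A(r)`, which depends only on `r² = s² + u²`.
A sum `g(s) + h(u)` depending only on `s² + u²` is affine in `s²` and `u²` (Cauchy's equation on
the half-line), so `p(l s) = p(s) + a(l) s²` and `q(l u) = q(u) + q(l) - q(1) + a(l) (u² - 1)`.
The second law is symmetric in `l` and `u`, which forces `a(l) = c (l² - 1)`; then `p - c t²` is
constant and `q - c t²` is a constant plus `k log t` (Cauchy again). Continuity of `φ_N` at `0`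
rules out `k < 0`. -/

theorem eq_mul_of_map_add_of_nonneg {f : ℝ → ℝ} (hf : ContinuousOn f (Ici 0))
    (hadd : ∀ x ≥ (0 : ℝ), ∀ y ≥ (0 : ℝ), f (x + y) = f x + f y) {x : ℝ} (hx : 0 ≤ x) :
    f x = x * f 1 := by
  have hsub : ∀ a b a' b' : ℝ, 0 ≤ a → 0 ≤ b → 0 ≤ a' → 0 ≤ b' → a - b = a' - b' →
      f a - f b = f a' - f b' := by
    intro a b a' b' ha hb ha' hb' h
    have h1 := hadd a ha b' hb'
    have h2 := hadd a' ha' b hb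
    rw [show a + b' = a' + b by linarith] at h1
    linarith
  -- `z ↦ f z⁺ - f z⁻` extends `f` to an additive map on all of `ℝ`
  let F : ℝ →+ ℝ := AddMonoidHom.mk' (fun z => f z⁺ - f z⁻) fun y z => by
    rw [hsub _ _ (y⁺ + z⁺) (y⁻ + z⁻) (posPart_nonneg _) (negPart_nonneg _)
      (by positivity) (by positivity)
      (by rw [posPart_sub_negPart]
          linear_combination -posPart_sub_negPart y - posPart_sub_negPart z),
      hadd _ (posPart_nonneg y) _ (posPart_nonneg z),
      hadd _ (negPart_nonneg y) _ (negPart_nonneg z)]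
    ring
  have hF : Continuous F :=
    (hf.comp_continuous continuous_posPart posPart_nonneg).sub
      (hf.comp_continuous continuous_negPart negPart_nonneg)
  have h0 : f 0 = 0 := by simpa using hadd 0 le_rfl 0 le_rfl
  have := map_real_smul F hF x 1
  simpa [F, posPart_of_nonneg hx, negPart_of_nonneg hx, h0] using this

theorem exists_sq_of_add_eq_add_of_sq_add_sq_eq {g h : ℝ → ℝ} (hg : Continuous g)
    (hgh : ∀ s s' u u' : ℝ, 0 < u → 0 < u' → s ^ 2 + u ^ 2 = s' ^ 2 + u' ^ 2 →
      g s + h u = g s' + h u') :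
    ∃ c : ℝ, (∀ s, g s = g 0 + c * s ^ 2) ∧ ∀ u > 0, h u = h 1 + c * (u ^ 2 - 1) := by
  set R : ℝ → ℝ := fun a => g (√a) - g 0
  have hR_add : ∀ a ≥ (0 : ℝ), ∀ b ≥ (0 : ℝ), R (a + b) = R a + R b := by
    intro a ha b hb
    have hb1 : 0 < √(b + 1) := sqrt_pos.mpr (by linarith)
    have h1 := hgh √(a + b) √a 1 √(b + 1) one_pos hb1
      (by rw [sq_sqrt (by linarith), sq_sqrt ha, sq_sqrt (by linarith)]; ring)
    have h2 := hgh √b 0 1 √(b + 1) one_pos hb1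
      (by rw [sq_sqrt hb, sq_sqrt (by linarith)]; ring)
    simp only [R]
    linarith
  have hR_cont : ContinuousOn R (Ici 0) :=
    ((hg.comp continuous_sqrt).sub continuous_const).continuousOn
  have hR : ∀ a ≥ (0 : ℝ), g √a = g 0 + a * R 1 := fun a ha => by
    linarith [eq_mul_of_map_add_of_nonneg hR_cont hR_add ha]
  refine ⟨R 1, fun s => ?_, fun u hu => ?_⟩
  · have hs := hgh s √(s ^ 2) 1 1 one_pos one_pos (by rw [sq_sqrt (sq_nonneg s)])
    linarith [hR (s ^ 2) (sq_nonneg s)]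
  · rcases le_total 1 u with h1u | hu1
    · have hu' := hgh 0 √(u ^ 2 - 1) u 1 hu one_pos (by rw [sq_sqrt (by nlinarith)]; ring)
      linarith [hR (u ^ 2 - 1) (by nlinarith)]
    · have hu' := hgh √(1 - u ^ 2) 0 u 1 hu one_pos (by rw [sq_sqrt (by nlinarith)]; ring)
      linarith [hR (1 - u ^ 2) (by nlinarith)]

theorem eq_mul_log_of_map_mul {e : ℝ → ℝ} (he : ContinuousOn e (Ioi 0))
    (hmul : ∀ x > (0 : ℝ), ∀ y > (0 : ℝ), e (x * y) = e x + e y) {t : ℝ} (ht : 0 < t) :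
    e t = e (exp 1) * log t := by
  let F : ℝ →+ ℝ := AddMonoidHom.mk' (fun z => e (exp z)) fun y z => by
    simp only [exp_add, hmul _ (exp_pos y) _ (exp_pos z)]
  have hF : Continuous F := he.comp_continuous continuous_exp exp_pos
  have := map_real_smul F hF (log t) 1
  simpa [F, exp_log ht, mul_comm] using this

def DilationIncrementIsRadial (p q : ℝ → ℝ) : Prop :=
  ∀ l > (0 : ℝ), ∀ s s' u u' : ℝ, 0 < u → 0 < u' → s ^ 2 + u ^ 2 = s' ^ 2 + u' ^ 2 →
    (p (l * s) - p s) + (q (l * u) - q u) = (p (l * s') - p s') + (q (l * u') - q u')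

theorem eq_add_mul_sq_of_dilation {p : ℝ → ℝ} {c : ℝ} (hp : ContinuousAt p 0)
    (hdil : ∀ l > (0 : ℝ), ∀ s, p (l * s) = p s + c * (l ^ 2 - 1) * s ^ 2) (s : ℝ) :
    p s = p 0 + c * s ^ 2 := by
  have hlim : Tendsto (fun l => p (l * s)) (𝓝[>] 0) (𝓝 (p s + c * (0 ^ 2 - 1) * s ^ 2)) := by
    have hpoly : Continuous fun l : ℝ => p s + c * (l ^ 2 - 1) * s ^ 2 := by fun_prop
    refine Tendsto.congr' ?_ ((hpoly.tendsto 0).mono_left nhdsWithin_le_nhds)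
    filter_upwards [self_mem_nhdsWithin] with l hl using (hdil l hl s).symm
  have hlim0 : Tendsto (fun l => p (l * s)) (𝓝[>] 0) (𝓝 (p 0)) := by
    have : Tendsto (fun l : ℝ => l * s) (𝓝[>] 0) (𝓝 0) := by
      simpa using ((continuous_mul_const s).tendsto 0).mono_left nhdsWithin_le_nhds
    exact (hp.tendsto.comp this)
  rw [tendsto_nhds_unique hlim0 hlim]
  ring

theorem eq_add_mul_sq_add_mul_log_of_dilation {q : ℝ → ℝ} {c : ℝ} (hq : ContinuousOn q (Ioi 0))
    (hdil : ∀ l > (0 : ℝ), ∀ u > (0 : ℝ),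
      q (l * u) = q u + (q l - q 1) + c * (l ^ 2 - 1) * (u ^ 2 - 1)) :
    ∃ k : ℝ, ∀ t > (0 : ℝ), q t = q 1 + c * (t ^ 2 - 1) + k * log t := by
  refine ⟨q (exp 1) - q 1 - c * (exp 1 ^ 2 - 1), fun t ht => ?_⟩
  have := eq_mul_log_of_map_mul (e := fun t => q t - q 1 - c * (t ^ 2 - 1))
    ((hq.sub continuousOn_const).sub (by fun_prop))
    (fun l hl u hu => by simp only [hdil l hl u hu]; ring) ht
  linarith

theorem exists_sq_log_of_dilationIncrementIsRadial {p q : ℝ → ℝ} (hp : Continuous p)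
    (hq : ContinuousOn q (Ioi 0)) (hpq : DilationIncrementIsRadial p q) :
    ∃ c k : ℝ, (∀ t, p t = p 0 + c * t ^ 2) ∧
      ∀ t > (0 : ℝ), q t = q 1 + c * (t ^ 2 - 1) + k * log t := by
  have hscale : ∀ l > (0 : ℝ), ∃ a : ℝ, (∀ s, p (l * s) = p s + a * s ^ 2) ∧
      ∀ u > (0 : ℝ), q (l * u) = q u + (q l - q 1) + a * (u ^ 2 - 1) := by
    intro l hl
    obtain ⟨a, hg, hh⟩ := exists_sq_of_add_eq_add_of_sq_add_sq_eq
      (g := fun s => p (l * s) - p s) (h := fun u => q (l * u) - q u) (by fun_prop) (hpq l hl)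
    refine ⟨a, fun s => ?_, fun u hu => ?_⟩
    · linarith [mul_zero l ▸ hg s]
    · linarith [mul_one l ▸ hh u hu]
  choose! a hp_scale hq_scale using hscale
  -- swapping the roles of `l` and `u` in the scaling law of `q` forces `a l ∝ l ^ 2 - 1`
  have ha : ∀ l > (0 : ℝ), a l = a 2 / 3 * (l ^ 2 - 1) := by
    intro l hl
    have h1 := hq_scale l hl 2 two_pos
    have h2 := hq_scale 2 two_pos l hl
    rw [mul_comm 2 l] at h2
    linear_combination (h2 - h1) / 3
  obtain ⟨k, hk⟩ := eq_add_mul_sq_add_mul_log_of_dilation hq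
    (fun l hl u hu => by rw [hq_scale l hl u hu, ha l hl])
  exact ⟨a 2 / 3, k, eq_add_mul_sq_of_dilation hp.continuousAt
    (fun l hl s => by rw [hp_scale l hl s, ha l hl]), hk⟩

theorem eq_of_mul_sq_sub_one_add_mul_log_eq {c k c' k' : ℝ}
    (h : ∀ t > (0 : ℝ), c * (t ^ 2 - 1) + k * log t = c' * (t ^ 2 - 1) + k' * log t) :
    c = c' := by
  have h2 := h 2 two_pos
  have h4 := h (2 ^ 2) (by norm_num)
  rw [log_pow] at h4
  linear_combination (h4 - 2 * h2) / 9

theorem mul_smul_eq_mul_smul_of_norm_eq {E : Type*} [NormedAddCommGroup E] [NormedSpace ℝ E]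
    {F A : E → ℝ} {R : ℝ → ℝ} {S : Set E} (hF : ∀ x ∈ S, F x = R ‖x‖ * A (‖x‖⁻¹ • x))
    {l : ℝ} (hl : 0 < l) {x y : E} (hx : x ∈ S) (hy : y ∈ S) (hlx : l • x ∈ S)
    (hly : l • y ∈ S) (hxy : ‖x‖ = ‖y‖) :
    F (l • x) * F y = F (l • y) * F x := by
  have hdir : ∀ z : E, ‖l • z‖⁻¹ • l • z = ‖z‖⁻¹ • z := fun z => by
    rw [norm_smul, norm_of_nonneg hl.le, smul_smul, mul_inv_rev, inv_mul_cancel_right₀ hl.ne']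
  rw [hF _ hlx, hF _ hly, hF _ hx, hF _ hy, hdir, hdir, norm_smul, norm_smul, hxy]
  ring

section TwoPoint

variable {N : ℕ}

def twoPoint (i L : Fin N) (s u : ℝ) : EuclideanSpace ℝ (Fin N) :=
  WithLp.toLp 2 fun j => if j = i then s else if j = L then u else 0

theorem twoPoint_apply_right {i L : Fin N} (h : i ≠ L) (s u : ℝ) : twoPoint i L s u L = u := by
  simp [twoPoint, h.symm]

theorem twoPoint_mul_mul (i L : Fin N) (l s u : ℝ) :
    twoPoint i L (l * s) (l * u) = l • twoPoint i L s u := by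
  ext j
  simp only [twoPoint, PiLp.smul_apply, PiLp.toLp_apply, smul_eq_mul]
  split_ifs <;> ring

theorem norm_twoPoint {i L : Fin N} (h : i ≠ L) (s u : ℝ) :
    ‖twoPoint i L s u‖ = √(s ^ 2 + u ^ 2) := by
  rw [EuclideanSpace.norm_eq, ← sum_subset (subset_univ {i, L}), sum_pair h]
  · simp [twoPoint, h.symm, sq_abs]
  · intro j _ hj
    simp_all [twoPoint]

theorem prod_twoPoint (φ : Fin N → ℝ → ℝ) {i L : Fin N} (h : i ≠ L) (s u : ℝ) :
    ∏ j, φ j (twoPoint i L s u j) = φ i s * φ L u * ∏ j ∈ {i, L}ᶜ, φ j 0 := by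
  rw [← prod_mul_prod_compl {i, L}, prod_pair h]
  congr 1
  · simp [twoPoint, h.symm]
  · refine prod_congr rfl fun j hj => ?_
    simp_all [twoPoint]

theorem dilationIncrementIsRadial_log_of_prod_eq (φ : Fin N → ℝ → ℝ) {i L : Fin N} (h : i ≠ L)
    (hφi : ∀ t, 0 < φ i t) (hφL : ∀ t > 0, 0 < φ L t)
    (hφ0 : ∀ j ∉ ({i, L} : Finset (Fin N)), φ j 0 ≠ 0)
    {R : ℝ → ℝ} {A : EuclideanSpace ℝ (Fin N) → ℝ}
    (hfact : ∀ x : EuclideanSpace ℝ (Fin N), 0 < x L → ∏ j, φ j (x j) = R ‖x‖ * A (‖x‖⁻¹ • x)) :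
    DilationIncrementIsRadial (fun t => log (φ i t)) (fun t => log (φ L t)) := by
  intro l hl s s' u u' hu hu' hsum
  have key := mul_smul_eq_mul_smul_of_norm_eq (S := {x | 0 < x L}) hfact hl
    (x := twoPoint i L s u) (y := twoPoint i L s' u')
    (by simp [twoPoint_apply_right h, hu]) (by simp [twoPoint_apply_right h, hu'])
    (by simp [← twoPoint_mul_mul, twoPoint_apply_right h, hu, hl])
    (by simp [← twoPoint_mul_mul, twoPoint_apply_right h, hu', hl])
    (by rw [norm_twoPoint h, norm_twoPoint h, hsum])
  simp only [← twoPoint_mul_mul, prod_twoPoint φ h] at key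
  have hC : ∏ j ∈ {i, L}ᶜ, φ j 0 ≠ 0 :=
    prod_ne_zero_iff.mpr fun j hj => hφ0 j (by simpa using hj)
  have hcross : φ i (l * s) * φ L (l * u) * (φ i s' * φ L u') =
      φ i (l * s') * φ L (l * u') * (φ i s * φ L u) := by
    apply mul_right_cancel₀ (mul_ne_zero hC hC)
    linear_combination key
  have hu_pos := hφL u hu
  have hu'_pos := hφL u' hu'
  have hlu_pos := hφL (l * u) (by positivity)
  have hlu'_pos := hφL (l * u') (by positivity)
  have hlog := congrArg log hcross
  simp only [log_mul, mul_ne_zero_iff, ne_eq, (hφi _).ne', hu_pos.ne', hu'_pos.ne', hlu_pos.ne',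
    hlu'_pos.ne', not_false_eq_true, and_self] at hlog
  linarith

end TwoPoint

theorem nonneg_of_continuousWithinAt_of_eq_mul_rpow_mul_exp {f : ℝ → ℝ} {a k c : ℝ} (ha : 0 < a)
    (hf : ContinuousWithinAt f (Ioi 0) 0) (h : ∀ t > (0 : ℝ), f t = a * t ^ k * exp (c * t ^ 2)) :
    0 ≤ k := by
  by_contra! hk
  have hlim : ContinuousWithinAt (fun t => f t * exp (-(c * t ^ 2)) / a) (Ioi 0) 0 :=
    (hf.mul (Continuous.continuousWithinAt (by fun_prop))).div_const a
  refine not_tendsto_atTop_of_tendsto_nhds hlim.tendsto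
    ((tendsto_rpow_neg_nhdsGT_zero hk).congr' ?_)
  filter_upwards [self_mem_nhdsWithin] with t ht
  rw [h t ht, mul_assoc, mul_assoc, ← exp_add, add_neg_cancel, exp_zero, mul_one,
    mul_div_cancel_left₀ _ ha.ne']

theorem prod_eq_mul_rpow_mul_exp {N : ℕ} {φ : Fin N → ℝ → ℝ} {L : Fin N} {a k c : ℝ}
    (hL : ∀ t > (0 : ℝ), φ L t = a * t ^ k * exp (c * t ^ 2))
    (hφ : ∀ j ≠ L, ∀ t, φ j t = φ j 0 * exp (c * t ^ 2))
    {x : EuclideanSpace ℝ (Fin N)} (hx : 0 < x L) :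
    ∏ j, φ j (x j) = a * (∏ j ∈ univ.erase L, φ j 0) * x L ^ k * exp (c * ‖x‖ ^ 2) := by
  have hnorm : ‖x‖ ^ 2 = x L ^ 2 + ∑ j ∈ univ.erase L, x j ^ 2 := by
    simp only [EuclideanSpace.norm_sq_eq, norm_eq_abs, sq_abs]
    exact (add_sum_erase _ _ (mem_univ L)).symm
  rw [← mul_prod_erase _ _ (mem_univ L), hL _ hx,
    prod_congr rfl fun j hj => hφ j (ne_of_mem_erase hj) _, prod_mul_distrib, ← exp_sum,
    hnorm, mul_add, exp_add, ← mul_sum]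
  ring

/-- If a product density `∏ φᵢ(xᵢ)` on the half-space `ℝᴺ₊ = {x_N > 0}`, with `φᵢ` positive
and `C²` on all of `ℝ` for `i < N` and `φ_N` positive and `C²` on `(0,∞)` extending
continuously to `[0,∞)`, factorizes as `A(|x|)·B(x/|x|)` with `A, B` positive and `C²`, then
`∏ φᵢ(xᵢ) = a·x_N^k·e^{c|x|²}` on `ℝᴺ₊` for some `a > 0`, `k ≥ 0`, `c ∈ ℝ`. -/
theorem factorized_density_halfspace (N : ℕ) (hN : 2 ≤ N)
    (φ : Fin N → ℝ → ℝ)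
    (hφC2 : ∀ i : Fin N, (i : ℕ) < N - 1 → ContDiff ℝ 2 (φ i))
    (hφpos : ∀ i : Fin N, (i : ℕ) < N - 1 → ∀ t : ℝ, 0 < φ i t)
    (hφNcont : ContinuousOn (φ ⟨N - 1, by omega⟩) (Ici (0:ℝ)))
    (hφNpos : ∀ t > (0:ℝ), 0 < φ ⟨N - 1, by omega⟩ t)
    (A : ℝ → ℝ)
    (B : EuclideanSpace ℝ (Fin N) → ℝ)
    (hfact : ∀ x : EuclideanSpace ℝ (Fin N), 0 < x ⟨N - 1, by omega⟩ →
      ∏ i, φ i (x i) = A ‖x‖ * B (‖x‖⁻¹ • x)) :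
    ∃ a > (0:ℝ), ∃ k ≥ (0:ℝ), ∃ c : ℝ,
      ∀ x : EuclideanSpace ℝ (Fin N), 0 < x ⟨N - 1, by omega⟩ →
        ∏ i, φ i (x i) = a * (x ⟨N - 1, by omega⟩) ^ k * Real.exp (c * ‖x‖ ^ 2) := by
  set L : Fin N := ⟨N - 1, by omega⟩
  have hlt : ∀ j ≠ L, (j : ℕ) < N - 1 := fun j hj => by
    have : (j : ℕ) ≠ N - 1 := fun h => hj (Fin.ext h)
    omega
  set q := fun t => log (φ L t)
  have hq : ContinuousOn q (Ioi 0) :=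
    (hφNcont.mono Ioi_subset_Ici_self).log fun t ht => (hφNpos t ht).ne'
  have hsol : ∀ i ≠ L, ∃ c k : ℝ, (∀ t, log (φ i t) = log (φ i 0) + c * t ^ 2) ∧
      ∀ t > (0 : ℝ), q t = q 1 + c * (t ^ 2 - 1) + k * log t := fun i hi =>
    exists_sq_log_of_dilationIncrementIsRadial
      ((hφC2 i (hlt i hi)).continuous.log fun t => (hφpos i (hlt i hi) t).ne') hq
      (dilationIncrementIsRadial_log_of_prod_eq φ hi (hφpos i (hlt i hi)) hφNpos
        (fun j hj => (hφpos j (hlt j (by simp_all)) 0).ne') hfact)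
  obtain ⟨c, k, -, hqform⟩ := hsol ⟨0, by omega⟩ (Fin.ne_of_val_ne (by simp [L]; omega))
  have hφ : ∀ j ≠ L, ∀ t, φ j t = φ j 0 * exp (c * t ^ 2) := by
    intro j hj t
    obtain ⟨c', k', hp, hq'⟩ := hsol j hj
    have hc : c' = c := eq_of_mul_sq_sub_one_add_mul_log_eq (k := k') (k' := k) fun t ht => by
      linarith [hqform t ht, hq' t ht]
    rw [← exp_log (hφpos j (hlt j hj) t), hp, hc, exp_add, exp_log (hφpos j (hlt j hj) 0)]
  have hφL : ∀ t > (0 : ℝ), φ L t = exp (q 1 - c) * t ^ k * exp (c * t ^ 2) := by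
    intro t ht
    rw [← exp_log (hφNpos t ht), rpow_def_of_pos ht, ← exp_add, ← exp_add]
    congr 1
    linear_combination hqform t ht
  refine ⟨exp (q 1 - c) * ∏ j ∈ univ.erase L, φ j 0, ?_, k,
    nonneg_of_continuousWithinAt_of_eq_mul_rpow_mul_exp (exp_pos _)
      ((hφNcont 0 self_mem_Ici).mono Ioi_subset_Ici_self) hφL,
    c, fun x hx => prod_eq_mul_rpow_mul_exp hφL hφ hx⟩
  exact mul_pos (exp_pos _) (prod_pos fun j hj => hφpos j (hlt j (ne_of_mem_erase hj)) 0)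
end

section
/- Let k ≥ 0 and consider the weight B_k(Θ) = (x_N/|x|)^k on the upper half-sphere S^{N-1}_+ = S^{N-1} ∩ {x_N > 0}. For each coordinate function u_i(x) = x_i with 1 ≤ i ≤ N-1, restricted to S^{N-1}_+, one has: (a) ∫_{S^{N-1}_+} u_i B_k dΘ = 0, and (b) ∫_{S^{N-1}_+} |∇_Θ u_i|² B_k dΘ = (N-1+k) ∫_{S^{N-1}_+} u_i² B_k dΘ, where ∇_Θ denotes the spherical gradient. -/
/-!
Integrate `x ↦ x_i ^ m * (x_n)₊ ^ k * exp (-‖x‖² / 2)` over `ℝᴺ` in two ways. Polar coordinates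
factor it as the half-sphere moment `∫ θ_i ^ m θ_n ^ k dΘ` times the radial integral
`D (m + k + N - 1)`, where `D q = ∫₀^∞ r ^ q e^{-r²/2} dr`; Fubini factors it into one-dimensional
Gaussian integrals. For `m = 1` the factor `∫ t e^{-t²/2} dt` vanishes, which gives (a). For
`m = 0` and `m = 2` the Fubini sides agree because `∫ t² e^{-t²/2} = ∫ e^{-t²/2}`, and
`D (q + 2) = (q + 1) D q` then yields `∫ θ_n ^ k = (N + k) ∫ θ_i² θ_n ^ k`, which is (b).
-/

open Real MeasureTheory Metric Set

noncomputable def gaussianMomentIoi (q : ℝ) : ℝ :=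
  ∫ r in Ioi (0 : ℝ), r ^ q * exp (-(1 / 2) * r ^ 2)

lemma gaussianMomentIoi_eq_Gamma {q : ℝ} (hq : -1 < q) :
    gaussianMomentIoi q = (1 / 2 : ℝ) ^ (-(q + 1) / 2) * (1 / 2) * Gamma ((q + 1) / 2) := by
  simpa only [gaussianMomentIoi, rpow_two] using
    integral_rpow_mul_exp_neg_mul_rpow two_pos hq (by norm_num : (0 : ℝ) < 1 / 2)

lemma gaussianMomentIoi_pos {q : ℝ} (hq : -1 < q) : 0 < gaussianMomentIoi q := by
  have := Gamma_pos_of_pos (by linarith : 0 < (q + 1) / 2)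
  rw [gaussianMomentIoi_eq_Gamma hq]
  positivity

lemma gaussianMomentIoi_add_two {q : ℝ} (hq : -1 < q) :
    gaussianMomentIoi (q + 2) = (q + 1) * gaussianMomentIoi q := by
  rw [gaussianMomentIoi_eq_Gamma hq, gaussianMomentIoi_eq_Gamma (by linarith),
    show (q + 2 + 1) / 2 = (q + 1) / 2 + 1 by ring, Gamma_add_one (by linarith),
    show -(q + 2 + 1) / 2 = -(q + 1) / 2 + -1 by ring, rpow_add (by norm_num), rpow_neg_one]
  ring

lemma integral_eq_two_mul_setIntegral_Ioi_of_even {f : ℝ → ℝ} (hf : Integrable f)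
    (heven : ∀ t, f (-t) = f t) : ∫ t, f t = 2 * ∫ t in Ioi 0, f t := by
  have hIic : ∫ t in Iic 0, f t = ∫ t in Ioi 0, f t := by
    simpa only [heven, neg_zero] using (integral_comp_neg_Ioi 0 f).symm
  rw [← intervalIntegral.integral_Iic_add_Ioi hf.integrableOn hf.integrableOn, hIic, two_mul]

lemma integral_pow_mul_exp_neg_half_sq_of_even {m : ℕ} (hm : Even m) :
    ∫ t : ℝ, t ^ m * exp (-(1 / 2) * t ^ 2) = 2 * gaussianMomentIoi m := by
  have hint : Integrable fun t : ℝ => t ^ m * exp (-(1 / 2) * t ^ 2) := by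
    simpa only [rpow_natCast] using
      integrable_rpow_mul_exp_neg_mul_sq (by norm_num : (0 : ℝ) < 1 / 2)
        (by linarith [m.cast_nonneg (α := ℝ)] : (-1 : ℝ) < m)
  rw [integral_eq_two_mul_setIntegral_Ioi_of_even hint fun t => by rw [hm.neg_pow, neg_sq]]
  simp only [gaussianMomentIoi, rpow_natCast]

lemma integral_sq_mul_exp_neg_half_sq :
    ∫ t : ℝ, t ^ 2 * exp (-(1 / 2) * t ^ 2) = ∫ t : ℝ, exp (-(1 / 2) * t ^ 2) := by
  have h0 := integral_pow_mul_exp_neg_half_sq_of_even (m := 0) .zero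
  have h2 := integral_pow_mul_exp_neg_half_sq_of_even (m := 2) even_two
  have hrec := gaussianMomentIoi_add_two (q := 0) (by norm_num)
  simp only [pow_zero, one_mul, Nat.cast_zero, Nat.cast_ofNat, zero_add] at h0 h2 hrec
  rw [h0, h2, hrec]

lemma integral_indicator_Ioi_rpow_mul_exp_neg_half_sq (k : ℝ) :
    ∫ t : ℝ, (Ioi 0).indicator (· ^ k) t * exp (-(1 / 2) * t ^ 2) = gaussianMomentIoi k := by
  rw [gaussianMomentIoi, ← integral_indicator measurableSet_Ioi]
  congr 1 with t
  exact (indicator_mul_left _ (· ^ k) fun r => exp (-(1 / 2) * r ^ 2)).symm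

lemma integral_mul_exp_neg_half_sq : ∫ t : ℝ, t * exp (-(1 / 2) * t ^ 2) = 0 := by
  have h := integral_neg_eq_self (fun t : ℝ => t * exp (-(1 / 2) * t ^ 2)) volume
  simp only [neg_sq, neg_mul, integral_neg] at h ⊢
  linarith

section Polar

variable {E : Type*} [NormedAddCommGroup E] [NormedSpace ℝ E] [FiniteDimensional ℝ E]
  [Nontrivial E] [MeasurableSpace E] [BorelSpace E] (μ : Measure E) [μ.IsAddHaarMeasure]

theorem integral_eq_integral_toSphere_mul_integral_Ioi {G : E → ℝ} {h : sphere (0 : E) 1 → ℝ}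
    {ψ : ℝ → ℝ} (hG : ∀ (θ : sphere (0 : E) 1) (r : ℝ), 0 < r → G (r • (θ : E)) = h θ * ψ r) :
    ∫ x, G x ∂μ =
      (∫ θ, h θ ∂μ.toSphere) * ∫ r in Ioi 0, r ^ (Module.finrank ℝ E - 1) * ψ r := by
  calc ∫ x, G x ∂μ
      = ∫ x : ({0}ᶜ : Set E), G x ∂(μ.comap (↑)) := by
        rw [integral_subtype_comap (measurableSet_singleton 0).compl, restrict_compl_singleton]
    _ = ∫ p : sphere (0 : E) 1 × Ioi (0 : ℝ), G ((homeomorphUnitSphereProd E).symm p : E)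
          ∂μ.toSphere.prod (.volumeIoiPow (Module.finrank ℝ E - 1)) := by
        rw [← μ.measurePreserving_homeomorphUnitSphereProd.integral_comp
          (Homeomorph.measurableEmbedding _)]
        simp only [Homeomorph.symm_apply_apply]
    _ = ∫ p : sphere (0 : E) 1 × Ioi (0 : ℝ), h p.1 * ψ p.2
          ∂μ.toSphere.prod (.volumeIoiPow (Module.finrank ℝ E - 1)) := by
        refine integral_congr_ae (ae_of_all _ fun p => ?_)
        simp only [homeomorphUnitSphereProd_symm_apply_coe]
        exact hG p.1 p.2 p.2.2
    _ = (∫ θ, h θ ∂μ.toSphere) *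
          ∫ r : Ioi (0 : ℝ), ψ r ∂.volumeIoiPow (Module.finrank ℝ E - 1) :=
        integral_prod_mul h (fun r : Ioi (0 : ℝ) => ψ r)
    _ = _ := by
        simp only [Measure.volumeIoiPow, ENNReal.ofReal]
        rw [integral_withDensity_eq_integral_smul
          ((measurable_subtype_coe.pow_const _).real_toNNReal),
          integral_subtype_comap measurableSet_Ioi fun r => (r ^ _).toNNReal • ψ r]
        refine congrArg _ (setIntegral_congr_fun measurableSet_Ioi fun r hr => ?_)
        rw [NNReal.smul_def, coe_toNNReal _ (pow_nonneg hr.out.le _), smul_eq_mul]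

end Polar

theorem Fintype.prod_ite_ite_eq {ι M : Type*} [Fintype ι] [DecidableEq ι] [CommMonoid M]
    {i n : ι} (hin : i ≠ n) (f g h : ι → M) :
    ∏ j, (if j = i then f j else if j = n then g j else h j) =
      f i * g n * ∏ j ∈ {i, n}ᶜ, h j := by
  rw [← Finset.prod_mul_prod_compl {i, n}, Finset.prod_pair hin, if_pos rfl, if_neg hin.symm,
    if_pos rfl]
  congr 1
  refine Finset.prod_congr rfl fun j hj => ?_
  simp only [Finset.mem_compl, Finset.mem_insert, Finset.mem_singleton, not_or] at hj
  rw [if_neg hj.1, if_neg hj.2]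

lemma indicator_Ioi_rpow_mul {r : ℝ} (hr : 0 < r) (k t : ℝ) :
    (Ioi 0).indicator (· ^ k) (r * t) = r ^ k * (Ioi 0).indicator (· ^ k) t := by
  by_cases ht : 0 < t
  · simp [indicator_of_mem, ht, hr, mul_rpow hr.le ht.le]
  · have hrt : ¬ 0 < r * t := by rwa [mul_pos_iff_of_pos_left hr]
    simp [indicator_of_notMem, ht, hrt]

namespace EuclideanSpace

variable {ι : Type*} [Fintype ι]

theorem integral_prod_apply (g : ι → ℝ → ℝ) :
    ∫ x : EuclideanSpace ℝ ι, ∏ j, g j (x j) = ∏ j, ∫ t, g j t := by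
  rw [← (volume_preserving_symm_measurableEquiv_toLp ι).symm.integral_comp'
    (fun x : EuclideanSpace ℝ ι => ∏ j, g j (x j))]
  exact integral_fintype_prod_volume_eq_prod g

lemma sum_sq_eq_one_of_mem_sphere {x : EuclideanSpace ℝ ι} (hx : x ∈ sphere 0 1) :
    ∑ j, x j ^ 2 = 1 := by
  rw [← real_norm_sq_eq, mem_sphere_zero_iff_norm.mp hx, one_pow]

lemma prod_exp_neg_half_sq_mul_of_mem_sphere {x : EuclideanSpace ℝ ι} (hx : x ∈ sphere 0 1)
    (r : ℝ) : ∏ j, exp (-(1 / 2) * (r * x j) ^ 2) = exp (-(1 / 2) * r ^ 2) := by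
  rw [← exp_sum]
  simp_rw [mul_pow, ← mul_assoc]
  rw [← Finset.mul_sum, sum_sq_eq_one_of_mem_sphere hx, mul_one]

end EuclideanSpace

section UpperHalfSphere

variable {ι : Type*} [Fintype ι]

def upperHalfSphere (n : ι) : Set (sphere (0 : EuclideanSpace ℝ ι) 1) :=
  {θ | 0 < (θ : EuclideanSpace ℝ ι) n}

lemma setIntegral_upperHalfSphere_eq_integral_indicator
    (f : sphere (0 : EuclideanSpace ℝ ι) 1 → ℝ) (n : ι) (k : ℝ) :
    ∫ θ in upperHalfSphere n, f θ * (θ : EuclideanSpace ℝ ι) n ^ k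
        ∂(volume : Measure (EuclideanSpace ℝ ι)).toSphere =
      ∫ θ, f θ * (Ioi 0).indicator (· ^ k) ((θ : EuclideanSpace ℝ ι) n)
        ∂(volume : Measure (EuclideanSpace ℝ ι)).toSphere := by
  have hmeas : MeasurableSet (upperHalfSphere (ι := ι) n) :=
    measurableSet_lt measurable_const (by fun_prop)
  rw [← integral_indicator hmeas]
  congr 1 with θ
  by_cases hθ : 0 < (θ : EuclideanSpace ℝ ι) n <;> simp [upperHalfSphere, hθ]

lemma integrable_toSphere_coord_pow_mul_rpow (i n : ι) (m : ℕ) {k : ℝ} (hk : 0 ≤ k) :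
    Integrable (fun θ : sphere (0 : EuclideanSpace ℝ ι) 1 =>
      (θ : EuclideanSpace ℝ ι) i ^ m * (θ : EuclideanSpace ℝ ι) n ^ k)
      (volume : Measure (EuclideanSpace ℝ ι)).toSphere := by
  have hcont : Continuous fun θ : sphere (0 : EuclideanSpace ℝ ι) 1 =>
      (θ : EuclideanSpace ℝ ι) i ^ m * (θ : EuclideanSpace ℝ ι) n ^ k := by
    fun_prop (disch := assumption)
  exact hcont.integrable_of_hasCompactSupport (.of_compactSpace _)

variable [DecidableEq ι]

theorem setIntegral_upperHalfSphere_mul_gaussianMomentIoi {i n : ι} (hin : i ≠ n) (m : ℕ)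
    (k : ℝ) :
    (∫ θ in upperHalfSphere n, (θ : EuclideanSpace ℝ ι) i ^ m * (θ : EuclideanSpace ℝ ι) n ^ k
        ∂(volume : Measure (EuclideanSpace ℝ ι)).toSphere) *
      gaussianMomentIoi (m + k + (Fintype.card ι - 1)) =
    (∫ t : ℝ, t ^ m * exp (-(1 / 2) * t ^ 2)) * gaussianMomentIoi k *
      (∫ t : ℝ, exp (-(1 / 2) * t ^ 2)) ^ (Fintype.card ι - 2) := by
  have : Nonempty ι := ⟨i⟩
  set w : ι → ℝ → ℝ := fun j t =>
    (if j = i then t ^ m else if j = n then (Ioi 0).indicator (· ^ k) t else 1) *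
      exp (-(1 / 2) * t ^ 2) with hw
  have hpolar := integral_eq_integral_toSphere_mul_integral_Ioi volume
    (G := fun x : EuclideanSpace ℝ ι => ∏ j, w j (x j))
    (h := fun θ => (θ : EuclideanSpace ℝ ι) i ^ m *
      (Ioi 0).indicator (· ^ k) ((θ : EuclideanSpace ℝ ι) n))
    (ψ := fun r => r ^ m * r ^ k * exp (-(1 / 2) * r ^ 2)) fun θ r hr => by
      simp only [hw, Finset.prod_mul_distrib, Fintype.prod_ite_ite_eq hin, Finset.prod_const_one,
        mul_one, PiLp.smul_apply, smul_eq_mul]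
      rw [EuclideanSpace.prod_exp_neg_half_sq_mul_of_mem_sphere θ.2, indicator_Ioi_rpow_mul hr,
        mul_pow]
      ring
  have hradial :
      ∫ r in Ioi 0, r ^ (Fintype.card ι - 1) * (r ^ m * r ^ k * exp (-(1 / 2) * r ^ 2)) =
      gaussianMomentIoi (m + k + (Fintype.card ι - 1)) := by
    refine setIntegral_congr_fun measurableSet_Ioi fun r (hr : 0 < r) => ?_
    rw [rpow_add hr, rpow_add hr, rpow_natCast, ← Nat.cast_pred Fintype.card_pos, rpow_natCast]
    ring
  have hcoord (j : ι) : ∫ t, w j t = if j = i then ∫ t : ℝ, t ^ m * exp (-(1 / 2) * t ^ 2)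
      else if j = n then gaussianMomentIoi k else ∫ t : ℝ, exp (-(1 / 2) * t ^ 2) := by
    split_ifs with hji hjn
    · simp only [hw, hji, if_true]
    · subst hjn
      simp only [hw, hji, if_true, if_false]
      exact integral_indicator_Ioi_rpow_mul_exp_neg_half_sq k
    · simp only [hw, hjn, hji, if_false, one_mul]
  have hcard : ({i, n}ᶜ : Finset ι).card = Fintype.card ι - 2 := by
    rw [Finset.card_compl, Finset.card_pair hin]
  have hfubini := EuclideanSpace.integral_prod_apply w
  rwa [hpolar, finrank_euclideanSpace, ← setIntegral_upperHalfSphere_eq_integral_indicator,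
    hradial, Finset.prod_congr rfl fun j _ => hcoord j, Fintype.prod_ite_ite_eq hin,
    Finset.prod_const, hcard] at hfubini

theorem setIntegral_upperHalfSphere_coord_mul_rpow {i n : ι} (hin : i ≠ n) {k : ℝ}
    (hk : -1 < k) :
    ∫ θ in upperHalfSphere n, (θ : EuclideanSpace ℝ ι) i * (θ : EuclideanSpace ℝ ι) n ^ k
      ∂(volume : Measure (EuclideanSpace ℝ ι)).toSphere = 0 := by
  have : Nonempty ι := ⟨i⟩
  have hcard : (1 : ℝ) ≤ Fintype.card ι := by exact_mod_cast Fintype.card_pos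
  have h := setIntegral_upperHalfSphere_mul_gaussianMomentIoi hin 1 k
  simp only [pow_one, integral_mul_exp_neg_half_sq, zero_mul] at h
  exact (mul_eq_zero.mp h).resolve_right (gaussianMomentIoi_pos (by push_cast; linarith)).ne'

theorem setIntegral_upperHalfSphere_one_sub_sq_mul_rpow {i n : ι} (hin : i ≠ n) {k : ℝ}
    (hk : 0 ≤ k) :
    ∫ θ in upperHalfSphere n,
        (1 - (θ : EuclideanSpace ℝ ι) i ^ 2) * (θ : EuclideanSpace ℝ ι) n ^ k
      ∂(volume : Measure (EuclideanSpace ℝ ι)).toSphere =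
    (Fintype.card ι - 1 + k) *
      ∫ θ in upperHalfSphere n, (θ : EuclideanSpace ℝ ι) i ^ 2 * (θ : EuclideanSpace ℝ ι) n ^ k
        ∂(volume : Measure (EuclideanSpace ℝ ι)).toSphere := by
  have : Nonempty ι := ⟨i⟩
  have hcard : (1 : ℝ) ≤ Fintype.card ι := by exact_mod_cast Fintype.card_pos
  have hq : -1 < k + (Fintype.card ι - 1) := by linarith
  have h0 := setIntegral_upperHalfSphere_mul_gaussianMomentIoi hin 0 k
  have h2 := setIntegral_upperHalfSphere_mul_gaussianMomentIoi hin 2 k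
  simp only [pow_zero, one_mul, Nat.cast_zero, zero_add, Nat.cast_ofNat] at h0 h2
  rw [integral_sq_mul_exp_neg_half_sq, ← h0, show 2 + k + (Fintype.card ι - 1 : ℝ) =
    k + (Fintype.card ι - 1) + 2 by ring, gaussianMomentIoi_add_two hq] at h2
  have hI0 : ∫ θ in upperHalfSphere n, (θ : EuclideanSpace ℝ ι) n ^ k
      ∂(volume : Measure (EuclideanSpace ℝ ι)).toSphere =
      (Fintype.card ι + k) * ∫ θ in upperHalfSphere n,
        (θ : EuclideanSpace ℝ ι) i ^ 2 * (θ : EuclideanSpace ℝ ι) n ^ k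
        ∂(volume : Measure (EuclideanSpace ℝ ι)).toSphere :=
    mul_right_cancel₀ (gaussianMomentIoi_pos hq).ne' (by linear_combination -h2)
  simp_rw [sub_mul, one_mul]
  have hint (m : ℕ) := (integrable_toSphere_coord_pow_mul_rpow i n m hk).integrableOn
    (s := upperHalfSphere n)
  rw [integral_sub (by simpa [IntegrableOn] using hint 0) (hint 2), hI0]
  ring

end UpperHalfSphere

/-- On the open upper half-sphere `S^{N-1}₊`, with surface measure `dΘ`, weight
`B_k(Θ) = (x_N)^k` (note `|x| = 1` on the sphere), and coordinate functions `u_i(x) = x_i`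
for `i ≤ N-1` (for which `|∇_Θ u_i|² = 1 - x_i²`), one has
`∫ u_i B_k dΘ = 0` and `∫ |∇_Θ u_i|² B_k dΘ = (N-1+k) ∫ u_i² B_k dΘ`. -/
theorem coordinate_eigenfunctions_halfsphere (N : ℕ) (hN : 2 ≤ N) (k : ℝ) (hk : 0 ≤ k)
    (i : Fin N) (hi : (i : ℕ) < N - 1) :
    (∫ x in {x : sphere (0 : EuclideanSpace ℝ (Fin N)) 1 |
          0 < (x : EuclideanSpace ℝ (Fin N)) ⟨N - 1, by omega⟩},
        (x : EuclideanSpace ℝ (Fin N)) i *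
          ((x : EuclideanSpace ℝ (Fin N)) ⟨N - 1, by omega⟩) ^ k
        ∂(volume : Measure (EuclideanSpace ℝ (Fin N))).toSphere) = 0 ∧
    (∫ x in {x : sphere (0 : EuclideanSpace ℝ (Fin N)) 1 |
          0 < (x : EuclideanSpace ℝ (Fin N)) ⟨N - 1, by omega⟩},
        (1 - ((x : EuclideanSpace ℝ (Fin N)) i) ^ 2) *
          ((x : EuclideanSpace ℝ (Fin N)) ⟨N - 1, by omega⟩) ^ k
        ∂(volume : Measure (EuclideanSpace ℝ (Fin N))).toSphere) =
      ((N : ℝ) - 1 + k) *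
        ∫ x in {x : sphere (0 : EuclideanSpace ℝ (Fin N)) 1 |
            0 < (x : EuclideanSpace ℝ (Fin N)) ⟨N - 1, by omega⟩},
          ((x : EuclideanSpace ℝ (Fin N)) i) ^ 2 *
            ((x : EuclideanSpace ℝ (Fin N)) ⟨N - 1, by omega⟩) ^ k
          ∂(volume : Measure (EuclideanSpace ℝ (Fin N))).toSphere := by
  have hin : i ≠ ⟨N - 1, by omega⟩ := Fin.ne_of_val_ne hi.ne
  have hb := setIntegral_upperHalfSphere_one_sub_sq_mul_rpow hin hk
  rw [Fintype.card_fin] at hb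
  exact ⟨setIntegral_upperHalfSphere_coord_mul_rpow hin (by linarith), hb⟩
end

section
/- Let I : (0,∞) → (0,∞) be a positive function, f* : (0,∞) → [0,∞) a decreasing function, μ_D > 0, 0 < q ≤ 2, and m : [0,∞) → [0, μ_D] a decreasing absolutely continuous distribution function. Suppose that for a.e. t > 0, 1 ≤ (I(m(t)))^{-2} (∫_0^{m(t)} f*(σ)dσ)(−m'(t)), and that −(d/dt)∫_{|u|>t}|∇u|^q dμ ≤ (∫_0^{m(t)} f*(s)ds)^{q/2} (−m'(t))^{1−q/2} for a.e. t. Then ∫_D |∇u|^q dμ ≤ ∫_0^{μ_D} I(s)^{−q} (∫_0^s f*(σ)dσ)^q ds. -/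
open Real MeasureTheory Set intervalIntegral

/-! On the set `T` of times `t > 0` with `m'(t) ≠ 0` the antitone function `m` is injective, so
the change of variables `s = m(t)` gives `∫_T |m'| g(m) = ∫_{m(T)} g ≤ ∫_0^{μ_D} g` for
`g(s) = I(s)^{-q} (∫_0^s f*)^q`. Almost every `t > 0` lies in `T`, since the isoperimetric
inequality `1 ≤ I(m)⁻² (∫_0^m f*)(−m')` forces `m' < 0`; raising it to the power `q/2` turns the
bound `−G' ≤ (∫_0^m f*)^{q/2} (−m')^{1−q/2}` into `−G' ≤ |m'| g(m)`. -/

lemma rpow_half_mul_rpow_one_sub_half_le {A p c q : ℝ} (hA : 0 < A) (hp : 0 < p) (hc : 0 < c)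
    (hq : 0 ≤ q) (h : 1 ≤ (c ^ 2)⁻¹ * A * p) :
    A ^ (q / 2) * p ^ (1 - q / 2) ≤ p * (c ^ (-q) * A ^ q) := by
  have hc2 : ((c ^ 2)⁻¹) ^ (q / 2) = c ^ (-q) := by
    rw [Real.inv_rpow (by positivity), ← Real.rpow_natCast_mul hc.le, Real.rpow_neg hc.le]
    norm_num [mul_div_cancel₀]
  have hA2 : A ^ (q / 2) * A ^ (q / 2) = A ^ q := by
    rw [← Real.rpow_add hA]; ring_nf
  have hp2 : p ^ (1 - q / 2) * p ^ (q / 2) = p := by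
    rw [← Real.rpow_add hp]; norm_num
  calc A ^ (q / 2) * p ^ (1 - q / 2)
      ≤ A ^ (q / 2) * p ^ (1 - q / 2) * ((c ^ 2)⁻¹ * A * p) ^ (q / 2) :=
        le_mul_of_one_le_right (by positivity) (Real.one_le_rpow h (by positivity))
    _ = (A ^ (q / 2) * A ^ (q / 2)) * (p ^ (1 - q / 2) * p ^ (q / 2)) * ((c ^ 2)⁻¹) ^ (q / 2) := by
        rw [Real.mul_rpow (by positivity) hp.le, Real.mul_rpow (by positivity) hA.le]; ring
    _ = p * (c ^ (-q) * A ^ q) := by rw [hA2, hp2, hc2]; ring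

lemma pos_of_one_le_inv_sq_mul_mul {A p c : ℝ} (hA : 0 ≤ A) (h : 1 ≤ (c ^ 2)⁻¹ * A * p) :
    0 < A ∧ 0 < p := by
  have hc : 0 ≤ (c ^ 2)⁻¹ := by positivity
  refine ⟨hA.lt_of_ne ?_, ?_⟩
  · rintro rfl; simp at h; linarith
  · by_contra! hp; nlinarith [mul_nonneg hc hA]

lemma AntitoneOn.injOn_setOf_deriv_ne_zero {m : ℝ → ℝ} {s : Set ℝ} (hs : s.OrdConnected)
    (hm : AntitoneOn m s) : InjOn m {t ∈ s | deriv m t ≠ 0} := by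
  suffices ∀ a ∈ {t ∈ s | deriv m t ≠ 0}, ∀ b ∈ s, a < b → m a ≠ m b by
    intro a ha b hb hab
    by_contra hne
    rcases lt_or_gt_of_ne hne with h | h
    · exact this a ha b hb.1 h hab
    · exact this b hb a ha.1 h hab.symm
  rintro a ⟨has, hda⟩ b hbs hab hmab
  have hconst : EqOn m (fun _ => m a) (Icc a b) := fun y hy => by
    have hys : y ∈ s := hs.out has hbs hy
    exact le_antisymm (hm has hys hy.1) (hmab ▸ hm hys hbs hy.2)
  have hud : UniqueDiffWithinAt ℝ (Icc a b) a := uniqueDiffOn_Icc hab a (left_mem_Icc.mpr hab.le)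
  have h0 : HasDerivWithinAt m 0 (Icc a b) a :=
    (hasDerivWithinAt_const a _ (m a)).congr hconst rfl
  exact hda ((differentiableAt_of_deriv_ne_zero hda).hasDerivAt.hasDerivWithinAt.derivWithin hud
    ▸ h0.derivWithin hud)

lemma integral_le_of_ae_le_of_integral_nonneg {α : Type*} [MeasurableSpace α] {μ : Measure α}
    {f g : α → ℝ} (hg : Integrable g μ) (hg0 : 0 ≤ ∫ x, g x ∂μ) (hfg : f ≤ᵐ[μ] g) :
    ∫ x, f x ∂μ ≤ ∫ x, g x ∂μ := by
  by_cases hf : Integrable f μ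
  · exact integral_mono_ae hf hg hfg
  · rwa [integral_undef hf]

section ChangeOfVariables

variable {m : ℝ → ℝ} {s : Set ℝ}

lemma hasDerivWithinAt_of_mem_setOf_deriv_ne_zero {t : ℝ} (ht : t ∈ {t ∈ s | deriv m t ≠ 0}) :
    HasDerivWithinAt m (deriv m t) {t ∈ s | deriv m t ≠ 0} t :=
  (differentiableAt_of_deriv_ne_zero ht.2).hasDerivAt.hasDerivWithinAt

lemma measurableSet_setOf_deriv_ne_zero (hs : MeasurableSet s) :
    MeasurableSet {t ∈ s | deriv m t ≠ 0} :=
  hs.inter (measurable_deriv m (measurableSet_singleton 0).compl)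

lemma AntitoneOn.integral_image_setOf_deriv_ne_zero (hs : MeasurableSet s) (hs' : s.OrdConnected)
    (hm : AntitoneOn m s) (g : ℝ → ℝ) :
    ∫ x in m '' {t ∈ s | deriv m t ≠ 0}, g x =
      ∫ t in {t ∈ s | deriv m t ≠ 0}, |deriv m t| * g (m t) :=
  integral_image_eq_integral_abs_deriv_smul (measurableSet_setOf_deriv_ne_zero hs)
    (fun _ => hasDerivWithinAt_of_mem_setOf_deriv_ne_zero) (hm.injOn_setOf_deriv_ne_zero hs') g

lemma AntitoneOn.integrableOn_abs_deriv_mul_comp (hs : MeasurableSet s) (hs' : s.OrdConnected)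
    (hm : AntitoneOn m s) {g : ℝ → ℝ}
    (hg : IntegrableOn g (m '' {t ∈ s | deriv m t ≠ 0})) :
    IntegrableOn (fun t => |deriv m t| * g (m t)) {t ∈ s | deriv m t ≠ 0} :=
  (integrableOn_image_iff_integrableOn_abs_deriv_smul (measurableSet_setOf_deriv_ne_zero hs)
    (fun _ => hasDerivWithinAt_of_mem_setOf_deriv_ne_zero) (hm.injOn_setOf_deriv_ne_zero hs') g).1 hg

end ChangeOfVariables

lemma ae_neg_le_indicator_abs_deriv_mul {I f m m' G' : ℝ → ℝ} {μD q : ℝ} (hq : 0 ≤ q)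
    (hI : ∀ s ∈ Ioo 0 μD, 0 < I s) (hf0 : ∀ s, 0 ≤ f s)
    (hm : AntitoneOn m (Ioi 0)) (hmrange : ∀ t > 0, m t ∈ Icc 0 μD)
    (hm' : ∀ᵐ t ∂volume.restrict (Ioi 0), HasDerivAt m (m' t) t)
    (hdiff : ∀ᵐ t ∂volume.restrict (Ioi 0),
      1 ≤ ((I (m t)) ^ 2)⁻¹ * (∫ σ in (0:ℝ)..m t, f σ) * (-m' t))
    (hgrad : ∀ᵐ t ∂volume.restrict (Ioi 0),
      -G' t ≤ (∫ σ in (0:ℝ)..m t, f σ) ^ (q / 2) * (-m' t) ^ (1 - q / 2)) :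
    ∀ᵐ t ∂volume.restrict (Ioi 0), -G' t ≤ {t ∈ Ioi 0 | deriv m t ≠ 0}.indicator
      (fun t => |deriv m t| * (I (m t) ^ (-q) * (∫ σ in (0:ℝ)..m t, f σ) ^ q)) t := by
  set T := {t ∈ Ioi (0:ℝ) | deriv m t ≠ 0}
  -- `I` need not be positive at `μD`, but `m` takes that value at most once on `T`.
  have hnull : volume (T ∩ m ⁻¹' {μD}) = 0 :=
    Subsingleton.measure_zero (fun a ha b hb =>
      hm.injOn_setOf_deriv_ne_zero ordConnected_Ioi ha.1 hb.1 (ha.2.trans hb.2.symm)) _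
  filter_upwards [ae_restrict_mem measurableSet_Ioi,
    ae_restrict_of_ae (measure_eq_zero_iff_ae_notMem.mp hnull), hm', hdiff, hgrad]
    with t ht htμ hd hdi hgr
  obtain ⟨hm0, hmμ⟩ := hmrange t ht
  obtain ⟨hA, hp⟩ := pos_of_one_le_inv_sq_mul_mul (integral_nonneg hm0 fun u _ => hf0 u) hdi
  have hT : t ∈ T := ⟨ht, by rw [hd.deriv]; linarith⟩
  have hmt : m t ∈ Ioo 0 μD :=
    ⟨hm0.lt_of_ne fun h => by simp [← h] at hA, hmμ.lt_of_ne fun h => htμ ⟨hT, h⟩⟩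
  rw [indicator_of_mem hT, hd.deriv, abs_of_neg (by linarith)]
  exact hgr.trans (rpow_half_mul_rpow_one_sub_half_le hA hp (hI _ hmt) hq hdi)

theorem talenti_gradient_comparison_step_general
    (I f m m' G' : ℝ → ℝ) (μD q E : ℝ)
    (hμD : 0 < μD) (hq : 0 < q)
    (hI : ∀ s ∈ Ioo 0 μD, 0 < I s)
    (hf0 : ∀ s, 0 ≤ f s)
    (hm : AntitoneOn m (Ici 0)) (hmrange : ∀ t ≥ 0, m t ∈ Icc 0 μD)
    (hm' : ∀ᵐ t ∂volume.restrict (Ioi 0), HasDerivAt m (m' t) t)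
    (hdiff : ∀ᵐ t ∂volume.restrict (Ioi 0),
      1 ≤ ((I (m t)) ^ 2)⁻¹ * (∫ σ in (0:ℝ)..m t, f σ) * (-m' t))
    (hgrad : ∀ᵐ t ∂volume.restrict (Ioi 0),
      -G' t ≤ (∫ σ in (0:ℝ)..m t, f σ) ^ (q / 2) * (-m' t) ^ (1 - q / 2))
    (hE : E = ∫ t in Ioi (0:ℝ), -G' t)
    (hconc : IntegrableOn (fun s => I s ^ (-q) * (∫ σ in (0:ℝ)..s, f σ) ^ q) (Ioc 0 μD)) :
    E ≤ ∫ s in (0:ℝ)..μD, I s ^ (-q) * (∫ σ in (0:ℝ)..s, f σ) ^ q := by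
  set g := fun s => I s ^ (-q) * (∫ σ in (0:ℝ)..s, f σ) ^ q
  set T := {t ∈ Ioi (0:ℝ) | deriv m t ≠ 0}
  have hmT : m '' T ⊆ Icc 0 μD := image_subset_iff.2 fun t ht => hmrange t ht.1.le
  have hg0 : 0 ≤ᵐ[volume.restrict (Icc 0 μD)] g :=
    ae_restrict_of_ae_eq_of_ae_restrict Ioo_ae_eq_Icc <| ae_restrict_of_forall_mem
      measurableSet_Ioo fun s hs => mul_nonneg (rpow_nonneg (hI s hs).le _)
        (rpow_nonneg (integral_nonneg hs.1.le fun u _ => hf0 u) _)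
  have hgIcc : IntegrableOn g (Icc 0 μD) := hconc.congr_set_ae Ioc_ae_eq_Icc.symm
  have hm₀ : AntitoneOn m (Ioi 0) := hm.mono Ioi_subset_Ici_self
  have hcov : ∫ t in Ioi 0, T.indicator (fun t => |deriv m t| * g (m t)) t = ∫ s in m '' T, g s := by
    rw [setIntegral_indicator (measurableSet_setOf_deriv_ne_zero measurableSet_Ioi),
      inter_eq_self_of_subset_right (sep_subset _ _),
      hm₀.integral_image_setOf_deriv_ne_zero measurableSet_Ioi ordConnected_Ioi]
  have hint : Integrable (T.indicator fun t => |deriv m t| * g (m t)) (volume.restrict (Ioi 0)) :=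
    ((hm₀.integrableOn_abs_deriv_mul_comp measurableSet_Ioi ordConnected_Ioi
      (hgIcc.mono_set hmT)).integrable_indicator
      (measurableSet_setOf_deriv_ne_zero measurableSet_Ioi)).restrict
  calc E ≤ ∫ t in Ioi 0, T.indicator (fun t => |deriv m t| * g (m t)) t :=
        hE ▸ integral_le_of_ae_le_of_integral_nonneg hint
          (hcov ▸ setIntegral_nonneg_of_ae_restrict (ae_restrict_of_ae_restrict_of_subset hmT hg0))
          (ae_neg_le_indicator_abs_deriv_mul hq.le hI hf0 hm₀ (fun t ht => hmrange t ht.le)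
            hm' hdiff hgrad)
    _ = ∫ s in m '' T, g s := hcov
    _ ≤ ∫ s in Icc 0 μD, g s := setIntegral_mono_set hgIcc hg0 hmT.eventuallyLE
    _ = ∫ s in (0:ℝ)..μD, g s := by rw [integral_of_le hμD.le, integral_Icc_eq_integral_Ioc]

/-- Abstract real-variable step of Talenti's gradient comparison: if `m` is a decreasing
absolutely continuous distribution function with values in `[0, μ_D]` satisfying a.e. the
isoperimetric differential inequality `1 ≤ I(m(t))⁻² (∫_0^{m(t)} f*)(−m'(t))`, and if the
gradient distribution `G(t) = ∫_{|u|>t} |∇u|^q dμ` satisfies a.e.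
`−G'(t) ≤ (∫_0^{m(t)} f*)^{q/2} (−m'(t))^{1−q/2}`, then (with the layer-cake identity
`∫_D |∇u|^q dμ = ∫_0^∞ (−G'(t)) dt`) one has
`∫_D |∇u|^q dμ ≤ ∫_0^{μ_D} I(s)^{−q} (∫_0^s f*)^q ds`. -/
theorem talenti_gradient_comparison_step
    (I f m m' G G' : ℝ → ℝ) (μD q E : ℝ)
    (hμD : 0 < μD) (hq : 0 < q) (hq2 : q ≤ 2)
    (hI : ∀ s ∈ Ioo 0 μD, 0 < I s) (hImeas : Measurable I)
    (hf : AntitoneOn f (Ioi 0)) (hf0 : ∀ s, 0 ≤ f s)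
    (hfint : IntegrableOn f (Ioc 0 μD))
    (hm : AntitoneOn m (Ici 0)) (hmrange : ∀ t ≥ 0, m t ∈ Icc 0 μD)
    (hm' : ∀ᵐ t ∂volume.restrict (Ioi 0), HasDerivAt m (m' t) t)
    (hG' : ∀ᵐ t ∂volume.restrict (Ioi 0), HasDerivAt G (G' t) t)
    (hdiff : ∀ᵐ t ∂volume.restrict (Ioi 0),
      1 ≤ ((I (m t)) ^ 2)⁻¹ * (∫ σ in (0:ℝ)..m t, f σ) * (-m' t))
    (hgrad : ∀ᵐ t ∂volume.restrict (Ioi 0),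
      -G' t ≤ (∫ σ in (0:ℝ)..m t, f σ) ^ (q / 2) * (-m' t) ^ (1 - q / 2))
    (hE : E = ∫ t in Ioi (0:ℝ), -G' t)
    (hconc : IntegrableOn (fun s => I s ^ (-q) * (∫ σ in (0:ℝ)..s, f σ) ^ q) (Ioc 0 μD)) :
    E ≤ ∫ s in (0:ℝ)..μD, I s ^ (-q) * (∫ σ in (0:ℝ)..s, f σ) ^ q :=
  talenti_gradient_comparison_step_general I f m m' G' μD q E hμD hq hI hf0 hm hmrange hm' hdiff
    hgrad hE hconc
end
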